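/- arXiv:math/0602278 — 3 statements merged into one kernel-verified Lean document; each statement's English description precedes it below -/
import Mathlib

section
/- Let θ > 0 and let X have the beta(θ,1) density θx^{θ-1} on (0,1). Define p₀(s) = e^{-s} and p₁(s) = ∫₀¹ ((e^{-sx} - e^{-s})/(1-x)) θ x^{θ-1} dx. Then p₁ is differentiable on (0,∞) with p₁'(s) = -p₁(s) + (θ/s^θ)·Γ(θ,0,s), where Γ(θ,0,s) = ∫₀^s e^{-t} t^{θ-1} dt is the lower incomplete gamma function. -/
open MeasureTheory Real Set intervalIntegral

/-!
Differentiate under the integral sign. The `s`-derivative of `(e^{-sx} - e^{-s}) / (1 - x)` is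
`-(e^{-sx} - e^{-s}) / (1 - x) + e^{-sx}`, and since `0 ≤ (e^{-sx} - e^{-s}) / (1 - x) ≤ s` on
`(0, 1)` it is dominated near `s` by a multiple of the integrable density `θ x^{θ-1}`. The remaining
term `∫₀¹ e^{-sx} θ x^{θ-1} dx` becomes `(θ / s^θ) ∫₀^s e^{-t} t^{θ-1} dt` under `t = s x`.
-/

noncomputable def expDivDiff (s x : ℝ) : ℝ := (exp (-(s * x)) - exp (-s)) / (1 - x)

lemma expDivDiff_nonneg {s x : ℝ} (hs : 0 ≤ s) (hx : x < 1) : 0 ≤ expDivDiff s x := by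
  have : exp (-s) ≤ exp (-(s * x)) := exp_le_exp.2 (by nlinarith)
  exact div_nonneg (by linarith) (by linarith)

-- `e^{-sx} - e^{-s} = e^{-sx} (1 - e^{-s(1-x)}) ≤ s (1 - x)`
lemma expDivDiff_le {s x : ℝ} (hs : 0 ≤ s) (hx : x ∈ Ioo (0 : ℝ) 1) :
    expDivDiff s x ≤ s := by
  have h1x : 0 < 1 - x := by linarith [hx.2]
  have hsplit : exp (-s) = exp (-(s * x)) * exp (-(s * (1 - x))) := by
    rw [← exp_add]; ring_nf
  have hle : 1 - s * (1 - x) ≤ exp (-(s * (1 - x))) := one_sub_le_exp_neg _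
  have hexp : exp (-(s * x)) ≤ 1 := exp_le_one_iff.2 (by nlinarith [hx.1])
  rw [expDivDiff, div_le_iff₀ h1x, hsplit]
  nlinarith [exp_pos (-(s * x)), mul_nonneg hs h1x.le]

lemma abs_expDivDiff_le {s x : ℝ} (hs : 0 ≤ s) (hx : x ∈ Ioo (0 : ℝ) 1) :
    |expDivDiff s x| ≤ s := by
  rw [abs_of_nonneg (expDivDiff_nonneg hs hx.2)]
  exact expDivDiff_le hs hx

lemma hasDerivAt_expDivDiff {x : ℝ} (hx : x ≠ 1) (s : ℝ) :
    HasDerivAt (expDivDiff · x) (-expDivDiff s x + exp (-(s * x))) s := by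
  have h1x : 1 - x ≠ 0 := sub_ne_zero.2 (Ne.symm hx)
  refine (((((hasDerivAt_id' s).mul_const x).neg.exp).sub
    (hasDerivAt_id' s).neg.exp).div_const (1 - x)).congr_deriv ?_
  simp only [expDivDiff, Pi.neg_apply]
  field_simp
  ring

lemma measurable_expDivDiff (s : ℝ) : Measurable (expDivDiff s) := by
  unfold expDivDiff; fun_prop

lemma norm_exp_neg_mul_le_one {s x : ℝ} (hs : 0 ≤ s) (hx : x ∈ Ioo (0 : ℝ) 1) :
    ‖exp (-(s * x))‖ ≤ 1 := by
  rw [norm_of_nonneg (exp_nonneg _), exp_le_one_iff, neg_nonpos]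
  exact mul_nonneg hs hx.1.le

theorem hasDerivAt_integral_expDivDiff_mul {w : ℝ → ℝ} (hw : IntegrableOn w (Ioo 0 1))
    {s : ℝ} (hs : 0 < s) :
    HasDerivAt (fun u => ∫ x in Ioo 0 1, expDivDiff u x * w x)
      (-(∫ x in Ioo 0 1, expDivDiff s x * w x) + ∫ x in Ioo 0 1, exp (-(s * x)) * w x) s := by
  have hIoo : ∀ᵐ x ∂volume.restrict (Ioo (0 : ℝ) 1), x ∈ Ioo 0 1 :=
    ae_restrict_mem measurableSet_Ioo
  have hF_int : IntegrableOn (fun x => expDivDiff s x * w x) (Ioo 0 1) :=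
    hw.bdd_mul (measurable_expDivDiff s).aestronglyMeasurable
      (hIoo.mono fun x hx => (norm_eq_abs _).trans_le (abs_expDivDiff_le hs.le hx))
  have hexp_int : IntegrableOn (fun x => exp (-(s * x)) * w x) (Ioo 0 1) :=
    hw.bdd_mul (by fun_prop) (hIoo.mono fun x hx => norm_exp_neg_mul_le_one hs.le hx)
  have hF'_bound : ∀ᵐ x ∂volume.restrict (Ioo 0 1), ∀ u ∈ Metric.ball s s,
      ‖(-expDivDiff u x + exp (-(u * x))) * w x‖ ≤ (2 * s + 1) * ‖w x‖ := by
    filter_upwards [hIoo] with x hx u hu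
    rw [Metric.mem_ball, dist_eq, abs_sub_lt_iff] at hu
    have hu0 : 0 ≤ u := by linarith
    rw [norm_mul]
    refine mul_le_mul_of_nonneg_right ?_ (norm_nonneg _)
    calc ‖-expDivDiff u x + exp (-(u * x))‖
        ≤ |expDivDiff u x| + ‖exp (-(u * x))‖ := by
          simpa only [norm_neg, norm_eq_abs] using norm_add_le (-expDivDiff u x) _
      _ ≤ 2 * s + 1 := by
          linarith [abs_expDivDiff_le hu0 hx, norm_exp_neg_mul_le_one hu0 hx]
  obtain ⟨-, hderiv⟩ := _root_.hasDerivAt_integral_of_dominated_loc_of_deriv_le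
    (F := fun u x => expDivDiff u x * w x)
    (F' := fun u x => (-expDivDiff u x + exp (-(u * x))) * w x)
    (Metric.ball_mem_nhds s hs)
    (Filter.Eventually.of_forall fun u => (measurable_expDivDiff u).aestronglyMeasurable.mul
      hw.aestronglyMeasurable)
    hF_int (((measurable_expDivDiff s).neg.add (by fun_prop)).aestronglyMeasurable.mul
      hw.aestronglyMeasurable)
    hF'_bound (hw.norm.const_mul _)
    (hIoo.mono fun x hx u _ => (hasDerivAt_expDivDiff hx.2.ne u).mul_const (w x))
  simp only [add_mul, neg_mul] at hderiv
  rwa [integral_add (f := fun x => -(expDivDiff s x * w x)) hF_int.neg hexp_int,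
    MeasureTheory.integral_neg] at hderiv

lemma integral_exp_neg_mul_mul_rpow {s : ℝ} (hs : 0 < s) (θ : ℝ) :
    ∫ x in Ioo 0 1, exp (-(s * x)) * (θ * x ^ (θ - 1)) =
      θ / s ^ θ * ∫ t in (0 : ℝ)..s, exp (-t) * t ^ (θ - 1) := by
  have hsub := intervalIntegral.integral_comp_mul_left
    (fun t => exp (-t) * t ^ (θ - 1)) (a := 0) (b := 1) hs.ne'
  simp only [mul_zero, mul_one, smul_eq_mul] at hsub
  have hpow : ∫ x in (0 : ℝ)..1, exp (-(s * x)) * (s * x) ^ (θ - 1) =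
      s ^ (θ - 1) * ∫ x in (0 : ℝ)..1, exp (-(s * x)) * x ^ (θ - 1) := by
    rw [← intervalIntegral.integral_const_mul]
    refine intervalIntegral.integral_congr fun x hx => ?_
    rw [uIcc_of_le zero_le_one] at hx
    simp only [mul_rpow hs.le hx.1]
    ring
  have hJ : ∫ t in (0 : ℝ)..s, exp (-t) * t ^ (θ - 1) =
      s ^ θ * ∫ x in (0 : ℝ)..1, exp (-(s * x)) * x ^ (θ - 1) := by
    have h := hsub.symm.trans hpow
    rw [rpow_sub_one hs.ne'] at h
    field_simp at h
    exact h
  rw [← integral_Ioc_eq_integral_Ioo, ← intervalIntegral.integral_of_le zero_le_one, hJ]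
  simp only [mul_left_comm (exp _) θ, intervalIntegral.integral_const_mul]
  field_simp

/-- For the beta(θ,1) model, `p₁(s) = ∫₀¹ ((e^{-sx}-e^{-s})/(1-x)) θx^{θ-1} dx`
is differentiable on `(0,∞)` with `p₁'(s) = -p₁(s) + (θ/s^θ)·∫₀^s e^{-t}t^{θ-1} dt`. -/
theorem stmt9 (θ : ℝ) (hθ : 0 < θ) (p₁ : ℝ → ℝ)
    (hp₁ : ∀ s : ℝ, p₁ s =
      ∫ x in Set.Ioo (0:ℝ) 1, ((Real.exp (-(s * x)) - Real.exp (-s)) / (1 - x)) * (θ * x ^ (θ - 1))) :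
    ∀ s : ℝ, 0 < s →
      HasDerivAt p₁
        (-p₁ s + (θ / s ^ θ) * ∫ t in (0:ℝ)..s, Real.exp (-t) * t ^ (θ - 1)) s := by
  intro s hs
  have hdensity : IntegrableOn (fun x => θ * x ^ (θ - 1)) (Ioo 0 1) :=
    ((intervalIntegral.integrableOn_Ioo_rpow_iff zero_lt_one).2 (by linarith)).const_mul θ
  rw [hp₁ s, show p₁ = _ from funext hp₁, ← integral_exp_neg_mul_mul_rpow hs]
  exact hasDerivAt_integral_expDivDiff_mul hdensity hs
end

section
/- Let θ > 0 and let p₀(s) = e^{-s}, p₁(s) = ∫₀¹ ((e^{-sx} - e^{-s})/(1-x)) θ x^{θ-1} dx. Then for all s > 0: s·p₁''(s) + (s + θ)·p₁'(s) = θ·(p₀(s) - p₁(s)). -/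
open MeasureTheory Real Set

/-!
Write `w x = θ x^{θ-1}`, `K s x = (e^{-sx} - e^{-s})/(1-x)` and `g s = ∫₀¹ e^{-sx} w x dx`.
Since `∂ₛ K s x = e^{-sx} - K s x` and `|K s x| ≤ |s| e^{|s|}` by the mean value theorem,
differentiation under the integral sign gives `p₁' = g - p₁` and `p₁'' = g' - g + p₁`, so
`s p₁'' + (s + θ) p₁' = s g' + θ g - θ p₁`. Finally `s g' + θ g = θ e^{-s}` is an integration
by parts: `(x^θ e^{-sx})' = (θ - s x) x^{θ-1} e^{-sx}`.
-/

namespace BetaOneModel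

theorem hasDerivAt_integral_mul_of_bounded {α : Type*} [MeasurableSpace α] {μ : Measure α}
    {w : α → ℝ} (hw : Integrable w μ) {F F' : ℝ → α → ℝ} {s₀ ε C : ℝ} (hε : 0 < ε)
    (hF_meas : ∀ s, AEStronglyMeasurable (F s) μ) (hF'_meas : AEStronglyMeasurable (F' s₀) μ)
    (hF_bound : ∀ᵐ x ∂μ, ‖F s₀ x‖ ≤ C)
    (hF'_bound : ∀ᵐ x ∂μ, ∀ s ∈ Metric.ball s₀ ε, ‖F' s x‖ ≤ C)
    (hF_deriv : ∀ᵐ x ∂μ, ∀ s ∈ Metric.ball s₀ ε, HasDerivAt (F · x) (F' s x) s) :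
    HasDerivAt (fun s ↦ ∫ x, F s x * w x ∂μ) (∫ x, F' s₀ x * w x ∂μ) s₀ := by
  refine (hasDerivAt_integral_of_dominated_loc_of_deriv_le (F := fun s x ↦ F s x * w x)
    (F' := fun s x ↦ F' s x * w x) (bound := fun x ↦ C * ‖w x‖)
    (Metric.ball_mem_nhds s₀ hε) (.of_forall fun s ↦ (hF_meas s).mul hw.1)
    (hw.bdd_mul (hF_meas s₀) hF_bound) (hF'_meas.mul hw.1) ?_ (hw.norm.const_mul C) ?_).2
  · filter_upwards [hF'_bound] with x hx s hs
    rw [norm_mul]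
    exact mul_le_mul_of_nonneg_right (hx s hs) (norm_nonneg _)
  · filter_upwards [hF_deriv] with x hx s hs
    exact (hx s hs).mul_const _

theorem integrableOn_mul_of_abs_le {α : Type*} [MeasurableSpace α] {μ : Measure α}
    {f w : α → ℝ} {S : Set α} {C : ℝ} (hS : MeasurableSet S) (hw : IntegrableOn w S μ)
    (hf : Measurable f) (hfC : ∀ x ∈ S, |f x| ≤ C) : IntegrableOn (fun x ↦ f x * w x) S μ :=
  Integrable.bdd_mul hw hf.aestronglyMeasurable ((ae_restrict_mem hS).mono hfC)

theorem exp_neg_mul_le_exp_abs {s x : ℝ} (hx : x ∈ Icc (0 : ℝ) 1) : exp (-(s * x)) ≤ exp |s| :=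
  exp_le_exp.2 <| calc
    -(s * x) ≤ |s * x| := neg_le_abs _
    _ = |s| * x := by rw [abs_mul, abs_of_nonneg hx.1]
    _ ≤ |s| := mul_le_of_le_one_right (abs_nonneg s) hx.2

theorem abs_exp_neg_mul_sub_exp_neg_le {s x : ℝ} (hx : x ∈ Icc (0 : ℝ) 1) :
    |exp (-(s * x)) - exp (-s)| ≤ |s| * exp |s| * (1 - x) := by
  have hderiv : ∀ t ∈ Icc (0 : ℝ) 1,
      HasDerivWithinAt (fun t ↦ exp (-(s * t))) (exp (-(s * t)) * -s) (Icc 0 1) t := fun _ _ ↦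
    (hasDerivAt_const_mul s).neg.exp.hasDerivWithinAt
  have hbound : ∀ t ∈ Icc (0 : ℝ) 1, ‖exp (-(s * t)) * -s‖ ≤ |s| * exp |s| := fun t ht ↦ by
    rw [norm_mul, norm_neg, norm_of_nonneg (exp_pos _).le, mul_comm, Real.norm_eq_abs]
    exact mul_le_mul_of_nonneg_left (exp_neg_mul_le_exp_abs ht) (abs_nonneg s)
  have := (convex_Icc (0 : ℝ) 1).norm_image_sub_le_of_norm_hasDerivWithin_le hderiv hbound
    (right_mem_Icc.2 zero_le_one) hx
  rwa [mul_one, Real.norm_eq_abs, Real.norm_eq_abs, abs_sub_comm x,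
    abs_of_nonneg (sub_nonneg.2 hx.2)] at this

noncomputable def expDiffQuotient (s x : ℝ) : ℝ := (exp (-(s * x)) - exp (-s)) / (1 - x)

theorem measurable_expDiffQuotient (s : ℝ) : Measurable (expDiffQuotient s) := by
  unfold expDiffQuotient; fun_prop

theorem abs_expDiffQuotient_le {s x : ℝ} (hx : x ∈ Ico (0 : ℝ) 1) :
    |expDiffQuotient s x| ≤ |s| * exp |s| := by
  have h1x : 0 < 1 - x := sub_pos.2 hx.2
  rw [expDiffQuotient, abs_div, abs_of_pos h1x, div_le_iff₀ h1x]
  exact abs_exp_neg_mul_sub_exp_neg_le (Ico_subset_Icc_self hx)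

theorem hasDerivAt_expDiffQuotient {x : ℝ} (hx : x ≠ 1) (s : ℝ) :
    HasDerivAt (expDiffQuotient · x) (exp (-(s * x)) - expDiffQuotient s x) s := by
  have h1x : 1 - x ≠ 0 := sub_ne_zero.2 hx.symm
  have hlin : HasDerivAt (fun s ↦ -(s * x)) (-x) s := (hasDerivAt_mul_const x).neg
  refine ((hlin.exp.sub (hasDerivAt_neg s).exp).div_const (1 - x)).congr_deriv ?_
  simp only [expDiffQuotient]
  field_simp
  ring

noncomputable def unitLaplace (w : ℝ → ℝ) (s : ℝ) : ℝ :=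
  ∫ x in Ioo (0 : ℝ) 1, exp (-(s * x)) * w x

section Weighted

variable {w : ℝ → ℝ}

theorem abs_le_abs_add_one_of_mem_ball {s s₀ : ℝ} (hs : s ∈ Metric.ball s₀ 1) :
    |s| ≤ |s₀| + 1 := by
  rw [Metric.mem_ball, Real.dist_eq] at hs
  linarith [abs_sub_abs_le_abs_sub s s₀]

theorem integrableOn_exp_neg_mul_mul (hw : IntegrableOn w (Ioo 0 1)) (s : ℝ) :
    IntegrableOn (fun x ↦ exp (-(s * x)) * w x) (Ioo 0 1) :=
  integrableOn_mul_of_abs_le measurableSet_Ioo hw (by fun_prop) fun x hx ↦ by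
    rw [abs_of_pos (exp_pos _)]
    exact exp_neg_mul_le_exp_abs (Ioo_subset_Icc_self hx)

theorem integrableOn_expDiffQuotient_mul (hw : IntegrableOn w (Ioo 0 1)) (s : ℝ) :
    IntegrableOn (fun x ↦ expDiffQuotient s x * w x) (Ioo 0 1) :=
  integrableOn_mul_of_abs_le measurableSet_Ioo hw (measurable_expDiffQuotient s) fun _ hx ↦
    abs_expDiffQuotient_le (Ioo_subset_Ico_self hx)

theorem hasDerivAt_unitLaplace (hw : IntegrableOn w (Ioo 0 1)) (s₀ : ℝ) :
    HasDerivAt (unitLaplace w) (-unitLaplace (fun x ↦ x * w x) s₀) s₀ := by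
  have hderiv := hasDerivAt_integral_mul_of_bounded (μ := volume.restrict (Ioo 0 1)) hw one_pos
    (F := fun s x ↦ exp (-(s * x))) (F' := fun s x ↦ -(x * exp (-(s * x))))
    (s₀ := s₀) (C := exp (|s₀| + 1)) (fun _ ↦ (by fun_prop : Continuous _).aestronglyMeasurable)
    (by fun_prop : Continuous _).aestronglyMeasurable ?_ ?_ ?_
  · refine hderiv.congr_deriv ?_
    rw [unitLaplace, ← integral_neg]
    exact integral_congr_ae (.of_forall fun x ↦ by ring)
  · filter_upwards [ae_restrict_mem measurableSet_Ioo] with x hx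
    rw [Real.norm_eq_abs, abs_of_pos (exp_pos _)]
    exact (exp_neg_mul_le_exp_abs (Ioo_subset_Icc_self hx)).trans (by gcongr; linarith)
  · filter_upwards [ae_restrict_mem measurableSet_Ioo] with x hx s hs
    rw [norm_neg, norm_mul, Real.norm_eq_abs, Real.norm_eq_abs, abs_of_pos hx.1,
      abs_of_pos (exp_pos _)]
    calc x * exp (-(s * x)) ≤ 1 * exp |s| :=
          mul_le_mul hx.2.le (exp_neg_mul_le_exp_abs (Ioo_subset_Icc_self hx)) (exp_pos _).le
            zero_le_one
      _ ≤ exp (|s₀| + 1) := by rw [one_mul]; exact exp_le_exp.2 (abs_le_abs_add_one_of_mem_ball hs)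
  · refine .of_forall fun x s _ ↦ ?_
    have hlin : HasDerivAt (fun s ↦ -(s * x)) (-x) s := (hasDerivAt_mul_const x).neg
    exact hlin.exp.congr_deriv (by ring)

theorem hasDerivAt_integral_expDiffQuotient_mul (hw : IntegrableOn w (Ioo 0 1)) (s₀ : ℝ) :
    HasDerivAt (fun s ↦ ∫ x in Ioo 0 1, expDiffQuotient s x * w x)
      (unitLaplace w s₀ - ∫ x in Ioo 0 1, expDiffQuotient s₀ x * w x) s₀ := by
  set R := |s₀| + 1
  have hderiv := hasDerivAt_integral_mul_of_bounded (μ := volume.restrict (Ioo 0 1)) hw one_pos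
    (F := expDiffQuotient) (F' := fun s x ↦ exp (-(s * x)) - expDiffQuotient s x)
    (s₀ := s₀) (C := (1 + R) * exp R) (fun s ↦ (measurable_expDiffQuotient s).aestronglyMeasurable)
    ((by fun_prop : Measurable fun x ↦ exp (-(s₀ * x))).sub
      (measurable_expDiffQuotient s₀)).aestronglyMeasurable ?_ ?_ ?_
  · refine hderiv.congr_deriv ?_
    rw [unitLaplace, ← integral_sub (integrableOn_exp_neg_mul_mul hw s₀)
      (integrableOn_expDiffQuotient_mul hw s₀)]
    exact integral_congr_ae (.of_forall fun x ↦ by ring)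
  · filter_upwards [ae_restrict_mem measurableSet_Ioo] with x hx
    rw [Real.norm_eq_abs]
    refine (abs_expDiffQuotient_le (Ioo_subset_Ico_self hx)).trans ?_
    gcongr <;> linarith
  · filter_upwards [ae_restrict_mem measurableSet_Ioo] with x hx s hs
    have hsR := abs_le_abs_add_one_of_mem_ball hs
    rw [Real.norm_eq_abs]
    calc |exp (-(s * x)) - expDiffQuotient s x|
        ≤ |exp (-(s * x))| + |expDiffQuotient s x| := abs_sub _ _
      _ ≤ exp |s| + |s| * exp |s| := by
          rw [abs_of_pos (exp_pos _)]
          exact add_le_add (exp_neg_mul_le_exp_abs (Ioo_subset_Icc_self hx))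
            (abs_expDiffQuotient_le (Ioo_subset_Ico_self hx))
      _ = (1 + |s|) * exp |s| := by ring
      _ ≤ (1 + R) * exp R := by gcongr
  · filter_upwards [ae_restrict_mem measurableSet_Ioo] with x hx s _
    exact hasDerivAt_expDiffQuotient hx.2.ne s

end Weighted

theorem integral_sub_mul_mul_exp_neg_mul_rpow {θ : ℝ} (hθ : 0 < θ) (s : ℝ) :
    ∫ x in Ioo (0 : ℝ) 1, (θ - s * x) * exp (-(s * x)) * x ^ (θ - 1) = exp (-s) := by
  have hcont : ContinuousOn (fun x ↦ x ^ θ * exp (-(s * x))) (Icc 0 1) :=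
    ((continuous_rpow_const hθ.le).mul (by fun_prop)).continuousOn
  have hderiv : ∀ x ∈ Ioo (0 : ℝ) 1, HasDerivAt (fun x ↦ x ^ θ * exp (-(s * x)))
      ((θ - s * x) * exp (-(s * x)) * x ^ (θ - 1)) x := fun x hx ↦ by
    have hpow := hasDerivAt_rpow_const (p := θ) (Or.inl hx.1.ne')
    have hlin : HasDerivAt (fun x ↦ -(s * x)) (-s) x := (hasDerivAt_const_mul s).neg
    refine (hpow.mul hlin.exp).congr_deriv ?_
    rw [rpow_sub_one hx.1.ne']
    field_simp [hx.1.ne']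
    ring
  have hpow : IntegrableOn (fun x : ℝ ↦ x ^ (θ - 1)) (Ioo 0 1) :=
    (intervalIntegral.integrableOn_Ioo_rpow_iff zero_lt_one).2 (by linarith)
  have hint : IntegrableOn (fun x ↦ (θ - s * x) * exp (-(s * x)) * x ^ (θ - 1)) (Ioo 0 1) :=
    integrableOn_mul_of_abs_le measurableSet_Ioo hpow (C := (θ + |s|) * exp |s|) (by fun_prop)
      fun x hx ↦ by
        have hlin : |θ - s * x| ≤ θ + |s| := calc
          |θ - s * x| ≤ |θ| + |s * x| := abs_sub _ _
          _ ≤ θ + |s| := by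
            rw [abs_of_pos hθ, abs_mul, abs_of_pos hx.1]
            gcongr
            exact mul_le_of_le_one_right (abs_nonneg s) hx.2.le
        rw [abs_mul, abs_of_pos (exp_pos _)]
        exact mul_le_mul hlin (exp_neg_mul_le_exp_abs (Ioo_subset_Icc_self hx)) (exp_pos _).le
          (by positivity)
  have hFTC := intervalIntegral.integral_eq_sub_of_hasDerivAt_of_le zero_le_one hcont hderiv
    ((intervalIntegrable_iff_integrableOn_Ioo_of_le zero_le_one).2 hint)
  rwa [intervalIntegral.integral_of_le zero_le_one, integral_Ioc_eq_integral_Ioo, one_rpow,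
    one_mul, mul_one, zero_rpow hθ.ne', zero_mul, sub_zero] at hFTC

theorem integrableOn_betaWeight {θ : ℝ} (hθ : 0 < θ) :
    IntegrableOn (fun x ↦ θ * x ^ (θ - 1)) (Ioo 0 1) :=
  ((intervalIntegral.integrableOn_Ioo_rpow_iff zero_lt_one).2 (by linarith)).const_mul θ

theorem mul_unitLaplace_sub_mul_unitLaplace {θ : ℝ} (hθ : 0 < θ) (s : ℝ) :
    θ * unitLaplace (fun x ↦ θ * x ^ (θ - 1)) s
      - s * unitLaplace (fun x ↦ x * (θ * x ^ (θ - 1))) s = θ * exp (-s) := by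
  have hw := integrableOn_betaWeight hθ
  have hxw : IntegrableOn (fun x : ℝ ↦ x * (θ * x ^ (θ - 1))) (Ioo 0 1) :=
    integrableOn_mul_of_abs_le measurableSet_Ioo hw measurable_id (C := 1) fun x hx ↦
      (abs_of_pos hx.1).trans_le hx.2.le
  simp only [unitLaplace]
  rw [← integral_const_mul, ← integral_const_mul,
    ← integral_sub ((integrableOn_exp_neg_mul_mul hw s).const_mul θ)
      ((integrableOn_exp_neg_mul_mul hxw s).const_mul s),
    ← integral_sub_mul_mul_exp_neg_mul_rpow hθ s, ← integral_const_mul]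
  exact integral_congr_ae (.of_forall fun x ↦ by ring)

end BetaOneModel

open BetaOneModel

/-- For the beta(θ,1) model, with `p₀(s) = e^{-s}` and
`p₁(s) = ∫₀¹ ((e^{-sx}-e^{-s})/(1-x)) θx^{θ-1} dx`, one has for all `s > 0`
`s·p₁''(s) + (s+θ)·p₁'(s) = θ·(p₀(s) - p₁(s))`. -/
theorem stmt10 (θ : ℝ) (hθ : 0 < θ) (p₀ p₁ : ℝ → ℝ)
    (hp₀ : ∀ s : ℝ, p₀ s = Real.exp (-s))
    (hp₁ : ∀ s : ℝ, p₁ s =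
      ∫ x in Set.Ioo (0:ℝ) 1, ((Real.exp (-(s * x)) - Real.exp (-s)) / (1 - x)) * (θ * x ^ (θ - 1))) :
    ∀ s : ℝ, 0 < s →
      s * deriv (deriv p₁) s + (s + θ) * deriv p₁ s = θ * (p₀ s - p₁ s) := by
  intro s _
  set w : ℝ → ℝ := fun x ↦ θ * x ^ (θ - 1)
  have hw : IntegrableOn w (Ioo 0 1) := integrableOn_betaWeight hθ
  have hp₁' : ∀ t, HasDerivAt p₁ (unitLaplace w t - p₁ t) t := by
    rw [show p₁ = fun s ↦ ∫ x in Ioo 0 1, expDiffQuotient s x * w x from funext hp₁]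
    exact hasDerivAt_integral_expDiffQuotient_mul hw
  have hd1 : deriv p₁ = fun t ↦ unitLaplace w t - p₁ t := funext fun t ↦ (hp₁' t).deriv
  have hd2 : HasDerivAt (deriv p₁)
      (-unitLaplace (fun x ↦ x * w x) s - (unitLaplace w s - p₁ s)) s := by
    rw [hd1]
    exact (hasDerivAt_unitLaplace hw s).sub (hp₁' s)
  rw [hd2.deriv, hd1, hp₀]
  linear_combination mul_unitLaplace_sub_mul_unitLaplace hθ s
end

section
/- Let X be uniform on (0,1), let s* be the root of ∫₀^s (e^t-1)/t dt = 1, and define v(∞, s*) = (e^{s*} - s* - 1)·∫_{s*}^∞ (e^{-t}/t) dt + e^{-s*}. Then 0.58 < v(∞, s*) < 0.581. -/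
open MeasureTheory Real Set intervalIntegral

open scoped Nat

/-!
The root `s*` is located in `(0.8043, 0.8044)` by comparing `∫₀^x (eᵗ - 1)/t dt` with the
integrals of the Taylor polynomials of `(eᵗ - 1)/t`, from below and (for `x ≤ 1`) from above.

For `E₁`, the Taylor polynomials `Tₙ` of `exp` alternately lie above and below it on `x ≤ 0`.
Since `Tₙ₊₁(-t)/t` has the explicit primitive `log t + ∑_{1 ≤ k ≤ n} (-t)ᵏ / (k · k!)`, this
bounds `∫ₐ⁸ e^{-t}/t dt` on both sides, and the tail `∫₈^∞` lies in `[0, e^{-8}/8]`.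
Since `e^{s} - s - 1`, `E₁(s)` and `e^{-s}` are monotone, interval arithmetic on
`s ∈ (0.8043, 0.8044)` finishes the proof.
-/

noncomputable section

namespace BestChoice

def expTaylor (n : ℕ) (x : ℝ) : ℝ := ∑ i ∈ Finset.range n, x ^ i / i !

def expSlopeTaylor (n : ℕ) (x : ℝ) : ℝ := ∑ i ∈ Finset.range n, x ^ i / (i + 1)!

def expSlopeIntegralTaylor (n : ℕ) (x : ℝ) : ℝ :=
  ∑ i ∈ Finset.range n, x ^ (i + 1) / ((i + 1) * (i + 1)!)

lemma expTaylor_succ (n : ℕ) (x : ℝ) : expTaylor (n + 1) x = 1 + x * expSlopeTaylor n x := by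
  rw [expTaylor, expSlopeTaylor, Finset.sum_range_succ', Finset.mul_sum, add_comm]
  simp only [pow_zero, Nat.factorial_zero, Nat.cast_one, div_one, pow_succ]
  congr 1
  exact Finset.sum_congr rfl fun i _ => by ring

lemma hasDerivAt_expTaylor_succ (n : ℕ) (x : ℝ) :
    HasDerivAt (expTaylor (n + 1)) (expTaylor n x) x := by
  refine (HasDerivAt.fun_sum (u := Finset.range (n + 1))
    fun i _ => (hasDerivAt_pow i x).div_const (i ! : ℝ)).congr_deriv ?_
  rw [Finset.sum_range_succ', expTaylor]
  simp only [Nat.cast_zero, zero_mul, zero_div, add_zero]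
  refine Finset.sum_congr rfl fun i _ => ?_
  rw [Nat.add_sub_cancel, Nat.factorial_succ]
  push_cast
  field_simp

lemma hasDerivAt_expSlopeIntegralTaylor (n : ℕ) (x : ℝ) :
    HasDerivAt (expSlopeIntegralTaylor n) (expSlopeTaylor n x) x := by
  refine (HasDerivAt.fun_sum (u := Finset.range n)
    fun i _ => (hasDerivAt_pow (i + 1) x).div_const (((i : ℝ) + 1) * (i + 1)!)).congr_deriv ?_
  refine Finset.sum_congr rfl fun i _ => ?_
  rw [Nat.add_sub_cancel]
  push_cast
  field_simp

lemma neg_one_pow_mul_exp_sub_expTaylor_nonneg (n : ℕ) {x : ℝ} (hx : x ≤ 0) :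
    0 ≤ (-1) ^ n * (exp x - expTaylor n x) := by
  induction n generalizing x with
  | zero => simpa [expTaylor] using (exp_pos x).le
  | succ n ih =>
    set h : ℝ → ℝ := fun y => (-1) ^ (n + 1) * (exp y - expTaylor (n + 1) y)
    have hderiv : ∀ y, HasDerivAt h (-((-1) ^ n * (exp y - expTaylor n y))) y := fun y => by
      refine (((hasDerivAt_exp y).sub (hasDerivAt_expTaylor_succ n y)).const_mul
        ((-1 : ℝ) ^ (n + 1))).congr_deriv ?_
      ring
    have hanti : AntitoneOn h (Iic 0) := by
      refine antitoneOn_of_deriv_nonpos (convex_Iic 0)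
        (fun y _ => (hderiv y).continuousAt.continuousWithinAt)
        (fun y _ => (hderiv y).differentiableAt.differentiableWithinAt) fun y hy => ?_
      rw [interior_Iic] at hy
      rw [(hderiv y).deriv, neg_nonpos]
      exact ih hy.le
    have h0 : h 0 = 0 := by simp [h, expTaylor_succ]
    simpa [h0] using hanti hx (mem_Iic.2 le_rfl) hx

lemma exp_le_expTaylor {n : ℕ} (hn : Odd n) {x : ℝ} (hx : x ≤ 0) : exp x ≤ expTaylor n x := by
  have := neg_one_pow_mul_exp_sub_expTaylor_nonneg n hx
  rw [hn.neg_one_pow] at this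
  linarith

lemma expTaylor_le_exp {n : ℕ} (hn : Even n) {x : ℝ} (hx : x ≤ 0) : expTaylor n x ≤ exp x := by
  have := neg_one_pow_mul_exp_sub_expTaylor_nonneg n hx
  rw [hn.neg_one_pow] at this
  linarith

lemma exp_sub_one_div_nonneg (x : ℝ) : 0 ≤ (exp x - 1) / x := by
  rcases le_total x 0 with hx | hx
  · exact div_nonneg_of_nonpos (by linarith [exp_le_one_iff.2 hx]) hx
  · exact div_nonneg (by linarith [one_le_exp hx]) hx

lemma continuous_dslope_exp : Continuous (dslope exp 0) :=
  continuousOn_univ.1 <|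
    (continuousOn_dslope Filter.univ_mem).2 ⟨continuous_exp.continuousOn, differentiableAt_exp⟩

/-- The integrand agrees with the continuous function `dslope exp 0` away from `t = 0`. -/
lemma intervalIntegrable_exp_sub_one_div (a b : ℝ) :
    IntervalIntegrable (fun t => (exp t - 1) / t) volume a b := by
  refine (continuous_dslope_exp.intervalIntegrable a b).congr_ae <|
    ae_restrict_of_ae <| (Measure.ae_ne volume 0).mono fun t ht => by
      rw [dslope_of_ne _ ht, slope_def_field, exp_zero, sub_zero]

lemma integral_exp_sub_one_div_mono {x y : ℝ} (hx : 0 ≤ x) (hxy : x ≤ y) :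
    ∫ t in (0 : ℝ)..x, (exp t - 1) / t ≤ ∫ t in (0 : ℝ)..y, (exp t - 1) / t :=
  integral_mono_interval le_rfl hx hxy (Filter.Eventually.of_forall exp_sub_one_div_nonneg)
    (intervalIntegrable_exp_sub_one_div 0 y)

lemma continuous_expSlopeTaylor (n : ℕ) : Continuous (expSlopeTaylor n) := by
  unfold expSlopeTaylor
  fun_prop

lemma integral_expSlopeTaylor (n : ℕ) (x : ℝ) :
    ∫ t in (0 : ℝ)..x, expSlopeTaylor n t = expSlopeIntegralTaylor n x := by
  rw [integral_eq_sub_of_hasDerivAt (fun t _ => hasDerivAt_expSlopeIntegralTaylor n t)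
    ((continuous_expSlopeTaylor n).intervalIntegrable 0 x)]
  simp [expSlopeIntegralTaylor]

lemma expSlopeTaylor_le_exp_sub_one_div (n : ℕ) {t : ℝ} (ht : 0 < t) :
    expSlopeTaylor n t ≤ (exp t - 1) / t := by
  rw [le_div_iff₀ ht]
  have := sum_le_exp_of_nonneg ht.le (n + 1)
  rw [← expTaylor, expTaylor_succ] at this
  linarith

lemma exp_sub_one_div_le (n : ℕ) {t : ℝ} (ht0 : 0 < t) (ht1 : t ≤ 1) :
    (exp t - 1) / t ≤ expSlopeTaylor n t + t ^ n * ((n + 2) / ((n + 1)! * (n + 1))) := by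
  rw [div_le_iff₀ ht0]
  have := exp_bound' ht0.le ht1 (n := n + 1) (by omega)
  rw [← expTaylor, expTaylor_succ] at this
  have hrem : t ^ (n + 1) * ((n + 1 : ℕ) + 1) / ((n + 1)! * (n + 1 : ℕ))
      = t ^ n * ((n + 2) / ((n + 1)! * (n + 1))) * t := by
    push_cast
    ring
  linarith

lemma expSlopeIntegralTaylor_le_integral (n : ℕ) {x : ℝ} (hx : 0 ≤ x) :
    expSlopeIntegralTaylor n x ≤ ∫ t in (0 : ℝ)..x, (exp t - 1) / t := by
  rw [← integral_expSlopeTaylor]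
  exact integral_mono_on_of_le_Ioo hx ((continuous_expSlopeTaylor n).intervalIntegrable 0 x)
    (intervalIntegrable_exp_sub_one_div 0 x) fun t ht => expSlopeTaylor_le_exp_sub_one_div n ht.1

lemma integral_le_expSlopeIntegralTaylor_add (n : ℕ) {x : ℝ} (hx0 : 0 ≤ x) (hx1 : x ≤ 1) :
    ∫ t in (0 : ℝ)..x, (exp t - 1) / t ≤
      expSlopeIntegralTaylor n x + x ^ (n + 1) * ((n + 2) / ((n + 1)! * (n + 1) ^ 2)) := by
  have hint : ∫ t in (0 : ℝ)..x, expSlopeTaylor n t + t ^ n * ((n + 2) / ((n + 1)! * (n + 1)))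
      = expSlopeIntegralTaylor n x + x ^ (n + 1) * ((n + 2) / ((n + 1)! * (n + 1) ^ 2)) := by
    rw [integral_add ((continuous_expSlopeTaylor n).intervalIntegrable 0 x)
      ((continuous_pow n).intervalIntegrable 0 x |>.mul_const _), integral_expSlopeTaylor,
      intervalIntegral.integral_mul_const, integral_pow]
    field_simp
    ring
  rw [← hint]
  refine integral_mono_on_of_le_Ioo hx0 (intervalIntegrable_exp_sub_one_div 0 x)
    (((continuous_expSlopeTaylor n).add (by fun_prop)).intervalIntegrable 0 x)
    fun t ht => exp_sub_one_div_le n ht.1 (ht.2.le.trans hx1)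

lemma integrableOn_exp_neg_div_Ioi {c : ℝ} (hc : 0 < c) :
    IntegrableOn (fun t => exp (-t) / t) (Ioi c) := by
  refine ((exp_neg_integrableOn_Ioi c one_pos).const_mul c⁻¹).mono' ?_ ?_
  · exact (ContinuousOn.div (by fun_prop) continuousOn_id
      fun t ht => (hc.trans ht).ne').aestronglyMeasurable measurableSet_Ioi
  · filter_upwards [ae_restrict_mem measurableSet_Ioi] with t ht
    have ht0 : 0 < t := hc.trans ht
    rw [norm_of_nonneg (by positivity), neg_one_mul, div_eq_inv_mul]
    gcongr
    exact ht.le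

lemma setIntegral_Ioi_exp_neg_div_nonneg {c : ℝ} (hc : 0 ≤ c) :
    0 ≤ ∫ t in Ioi c, exp (-t) / t :=
  setIntegral_nonneg measurableSet_Ioi fun t ht => by
    have : 0 < t := hc.trans_lt ht
    positivity

lemma setIntegral_Ioi_exp_neg_div_le {c : ℝ} (hc : 0 < c) :
    ∫ t in Ioi c, exp (-t) / t ≤ exp (-c) / c := by
  calc ∫ t in Ioi c, exp (-t) / t ≤ ∫ t in Ioi c, c⁻¹ * exp (-t) := by
        refine setIntegral_mono_on (integrableOn_exp_neg_div_Ioi hc) ?_ measurableSet_Ioi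
          fun t ht => ?_
        · have h := (exp_neg_integrableOn_Ioi c one_pos).const_mul c⁻¹
          simp only [neg_one_mul] at h
          exact h
        · rw [div_eq_inv_mul]
          gcongr
          exact le_of_lt ht
    _ = exp (-c) / c := by
      rw [MeasureTheory.integral_const_mul, integral_exp_neg_Ioi, inv_mul_eq_div]

lemma setIntegral_Ioi_exp_neg_div_anti {x y : ℝ} (hx : 0 < x) (hxy : x ≤ y) :
    ∫ t in Ioi y, exp (-t) / t ≤ ∫ t in Ioi x, exp (-t) / t :=
  setIntegral_mono_set (integrableOn_exp_neg_div_Ioi hx)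
    ((ae_restrict_mem measurableSet_Ioi).mono fun t ht => by
      have : 0 < t := hx.trans ht
      positivity)
    (Ioi_subset_Ioi hxy).eventuallyLE

lemma setIntegral_Ioi_exp_neg_div_eq_add {a c : ℝ} (ha : 0 < a) (hac : a ≤ c) :
    ∫ t in Ioi a, exp (-t) / t = (∫ t in a..c, exp (-t) / t) + ∫ t in Ioi c, exp (-t) / t := by
  rw [integral_of_le hac, ← setIntegral_union Ioc_disjoint_Ioi_same measurableSet_Ioi
      ((integrableOn_exp_neg_div_Ioi ha).mono_set Ioc_subset_Ioi_self)
      (integrableOn_exp_neg_div_Ioi (ha.trans_le hac)), Ioc_union_Ioi_eq_Ioi hac]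

lemma hasDerivAt_log_add_expSlopeIntegralTaylor_neg (n : ℕ) {t : ℝ} (ht : 0 < t) :
    HasDerivAt (fun y => log y + expSlopeIntegralTaylor n (-y))
      (expTaylor (n + 1) (-t) / t) t := by
  refine ((hasDerivAt_log ht.ne').add
    ((hasDerivAt_expSlopeIntegralTaylor n (-t)).comp t (hasDerivAt_neg t))).congr_deriv ?_
  rw [expTaylor_succ]
  field_simp

lemma intervalIntegrable_div_self {f : ℝ → ℝ} (hf : Continuous f) {a c : ℝ} (ha : 0 < a)
    (hc : 0 < c) : IntervalIntegrable (fun t => f t / t) volume a c :=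
  (hf.continuousOn.div continuousOn_id fun _ ht =>
    ((lt_min ha hc).trans_le ht.1).ne').intervalIntegrable

lemma continuous_expTaylor (n : ℕ) : Continuous (expTaylor n) := by
  unfold expTaylor
  fun_prop

lemma integral_expTaylor_neg_div (n : ℕ) {a c : ℝ} (ha : 0 < a) (hac : a ≤ c) :
    ∫ t in a..c, expTaylor (n + 1) (-t) / t =
      (log c + expSlopeIntegralTaylor n (-c)) - (log a + expSlopeIntegralTaylor n (-a)) :=
  integral_eq_sub_of_hasDerivAt
    (fun _ ht => hasDerivAt_log_add_expSlopeIntegralTaylor_neg n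
      (ha.trans_le (uIcc_of_le hac ▸ ht).1))
    (intervalIntegrable_div_self ((continuous_expTaylor _).comp continuous_neg) ha
      (ha.trans_le hac))

lemma integral_exp_neg_div_le {n : ℕ} (hn : Even n) {a c : ℝ} (ha : 0 < a) (hac : a ≤ c) :
    ∫ t in a..c, exp (-t) / t ≤
      (log c + expSlopeIntegralTaylor n (-c)) - (log a + expSlopeIntegralTaylor n (-a)) := by
  rw [← integral_expTaylor_neg_div n ha hac]
  refine integral_mono_on hac (intervalIntegrable_div_self (by fun_prop) ha (ha.trans_le hac))
    (intervalIntegrable_div_self ((continuous_expTaylor _).comp continuous_neg) ha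
      (ha.trans_le hac)) fun t ht => ?_
  have ht0 : 0 < t := ha.trans_le ht.1
  gcongr
  exact exp_le_expTaylor hn.add_one (by linarith)

lemma le_integral_exp_neg_div {n : ℕ} (hn : Odd n) {a c : ℝ} (ha : 0 < a) (hac : a ≤ c) :
    (log c + expSlopeIntegralTaylor n (-c)) - (log a + expSlopeIntegralTaylor n (-a)) ≤
      ∫ t in a..c, exp (-t) / t := by
  rw [← integral_expTaylor_neg_div n ha hac]
  refine integral_mono_on hac
    (intervalIntegrable_div_self ((continuous_expTaylor _).comp continuous_neg) ha
      (ha.trans_le hac)) (intervalIntegrable_div_self (by fun_prop) ha (ha.trans_le hac))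
    fun t ht => ?_
  have ht0 : 0 < t := ha.trans_le ht.1
  gcongr
  exact expTaylor_le_exp hn.add_one (by linarith)

lemma integral_exp_sub_one_div_lt_one : ∫ t in (0 : ℝ)..0.8043, (exp t - 1) / t < 1 := by
  refine (integral_le_expSlopeIntegralTaylor_add 7 (by norm_num) (by norm_num)).trans_lt ?_
  norm_num [expSlopeIntegralTaylor, Finset.sum_range_succ, Nat.factorial]

lemma one_lt_integral_exp_sub_one_div : 1 < ∫ t in (0 : ℝ)..0.8044, (exp t - 1) / t := by
  refine lt_of_lt_of_le ?_ (expSlopeIntegralTaylor_le_integral 7 (by norm_num))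
  norm_num [expSlopeIntegralTaylor, Finset.sum_range_succ, Nat.factorial]

lemma mem_Ioo_of_integral_exp_sub_one_div_eq_one {s : ℝ} (hs : 0 ≤ s)
    (hroot : ∫ t in (0 : ℝ)..s, (exp t - 1) / t = 1) : s ∈ Ioo 0.8043 0.8044 := by
  constructor
  · by_contra! h
    have := integral_exp_sub_one_div_mono hs h
    linarith [integral_exp_sub_one_div_lt_one]
  · by_contra! h
    have := integral_exp_sub_one_div_mono (by norm_num) h
    linarith [one_lt_integral_exp_sub_one_div]

/-- The `E₁` integrals are split at `8 = 2³` so that `log 8` is controlled by bounds on `log 2`. -/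
lemma log_eight_eq : log 8 = 3 * log 2 := by
  rw [show (8 : ℝ) = 2 ^ 3 by norm_num, log_pow, Nat.cast_ofNat]

lemma le_setIntegral_Ioi_exp_neg_div_of_le {s : ℝ} (hs0 : 0 < s) (hs : s ≤ 0.8044) :
    0.30808 ≤ ∫ t in Ioi s, exp (-t) / t := by
  have hlog : log 0.8044 < -0.21765 := by
    rw [log_lt_iff_lt_exp (by norm_num)]
    refine lt_of_lt_of_le ?_ (expTaylor_le_exp (n := 8) (by decide) (by norm_num))
    norm_num [expTaylor, Finset.sum_range_succ, Nat.factorial]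
  have hmain := le_integral_exp_neg_div (n := 27) (by decide) (a := 0.8044) (c := 8)
    (by norm_num) (by norm_num)
  norm_num only [expSlopeIntegralTaylor, Finset.sum_range_succ, Nat.factorial] at hmain
  have hsplit := setIntegral_Ioi_exp_neg_div_eq_add (a := 0.8044) (c := 8) (by norm_num)
    (by norm_num)
  have htail := setIntegral_Ioi_exp_neg_div_nonneg (c := 8) (by norm_num)
  have hanti := setIntegral_Ioi_exp_neg_div_anti hs0 hs
  linarith [log_two_gt_d9, log_eight_eq]

lemma setIntegral_Ioi_exp_neg_div_le_of_le {s : ℝ} (hs : 0.8043 ≤ s) :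
    ∫ t in Ioi s, exp (-t) / t ≤ 0.30821 := by
  have hlog : -0.21779 < log 0.8043 := by
    rw [lt_log_iff_exp_lt (by norm_num)]
    refine lt_of_le_of_lt (exp_le_expTaylor (n := 7) (by decide) (by norm_num)) ?_
    norm_num [expTaylor, Finset.sum_range_succ, Nat.factorial]
  have hexp : exp (-8) < 0.00034 := by
    rw [exp_neg, inv_lt_comm₀ (exp_pos 8) (by norm_num), ← Nat.cast_ofNat, ← exp_one_pow]
    calc (0.00034 : ℝ)⁻¹ < 2.7182818283 ^ 8 := by norm_num
      _ < exp 1 ^ 8 := by gcongr; exact exp_one_gt_d9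
  have hmain := integral_exp_neg_div_le (n := 28) (by decide) (a := 0.8043) (c := 8)
    (by norm_num) (by norm_num)
  norm_num only [expSlopeIntegralTaylor, Finset.sum_range_succ, Nat.factorial] at hmain
  have hsplit := setIntegral_Ioi_exp_neg_div_eq_add (a := 0.8043) (c := 8) (by norm_num)
    (by norm_num)
  have htail := setIntegral_Ioi_exp_neg_div_le (c := 8) (by norm_num)
  have hanti := setIntegral_Ioi_exp_neg_div_anti (by norm_num) hs
  linarith [log_two_lt_d9, log_eight_eq]

lemma exp_sub_sub_one_mem_Icc {s : ℝ} (hs : s ∈ Ioo 0.8043 0.8044) :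
    exp s - s - 1 ∈ Icc 0.43073 0.43106 := by
  have hlo : 2.23513 < exp 0.8043 := by
    refine lt_of_lt_of_le ?_ (sum_le_exp_of_nonneg (by norm_num) 10)
    norm_num [Finset.sum_range_succ, Nat.factorial]
  have hhi : exp 0.8044 < 2.23536 := by
    refine lt_of_le_of_lt (exp_bound' (n := 10) (by norm_num) (by norm_num) (by norm_num)) ?_
    norm_num [Finset.sum_range_succ, Nat.factorial]
  constructor <;> linarith [hs.1, hs.2, exp_lt_exp.2 hs.1, exp_lt_exp.2 hs.2]

lemma exp_neg_mem_Icc {s : ℝ} (hs : s ∈ Ioo 0.8043 0.8044) :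
    exp (-s) ∈ Icc 0.44735 0.44741 := by
  have hlo : 0.44735 < exp (-0.8044) := by
    refine lt_of_lt_of_le ?_ (expTaylor_le_exp (n := 10) (by decide) (by norm_num))
    norm_num [expTaylor, Finset.sum_range_succ, Nat.factorial]
  have hhi : exp (-0.8043) < 0.44741 := by
    refine lt_of_le_of_lt (exp_le_expTaylor (n := 9) (by decide) (by norm_num)) ?_
    norm_num [expTaylor, Finset.sum_range_succ, Nat.factorial]
  constructor <;> linarith [exp_lt_exp.2 (neg_lt_neg hs.1), exp_lt_exp.2 (neg_lt_neg hs.2)]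

end BestChoice

end

open BestChoice in
/-- For uniform `X`, with `s*` the root of `∫₀^s (e^t-1)/t dt = 1`, the
optimal probability `v(∞,s*) = (e^{s*} - s* - 1)·∫_{s*}^∞ e^{-t}/t dt + e^{-s*}`
satisfies `0.58 < v(∞,s*) < 0.581`. -/
theorem stmt14 (sstar : ℝ) (hs : 0 < sstar)
    (hroot : (∫ t in (0:ℝ)..sstar, (Real.exp t - 1) / t) = 1)
    (v : ℝ)
    (hv : v = (Real.exp sstar - sstar - 1) * (∫ t in Set.Ioi sstar, Real.exp (-t) / t)
      + Real.exp (-sstar)) :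
    0.58 < v ∧ v < 0.581 := by
  have hmem := mem_Ioo_of_integral_exp_sub_one_div_eq_one hs.le hroot
  obtain ⟨hX₁, hX₂⟩ := exp_sub_sub_one_mem_Icc hmem
  obtain ⟨hexp₁, hexp₂⟩ := exp_neg_mem_Icc hmem
  have hE₁ := le_setIntegral_Ioi_exp_neg_div_of_le hs hmem.2.le
  have hE₂ := setIntegral_Ioi_exp_neg_div_le_of_le hmem.1.le
  subst hv
  constructor
  · nlinarith [mul_le_mul hX₁ hE₁ (by norm_num) (by linarith)]
  · nlinarith [mul_le_mul hX₂ hE₂ (setIntegral_Ioi_exp_neg_div_nonneg hs.le) (by norm_num)]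
end
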